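/- The set of seven points {(0,0,0), (1,0,0), (0,1,0), (0,0,1), (1,1,0), (1,0,1), (0,1,1)} is contained in the surface x² + y² + z² + xyz = x + y + z and is invariant under each of the three Vieta involutions s_x(x,y,z) = (1 − x − yz, y, z), s_y(x,y,z) = (x, 1 − y − zx, z), s_z(x,y,z) = (x, y, 1 − z − xy). Hence it is a finite orbit of the group generated by s_x, s_y, s_z. -/
import Mathlib


/-- The Boalch–Klein orbit: the seven points
`(0,0,0), (1,0,0), (0,1,0), (0,0,1), (1,1,0), (1,0,1), (0,1,1)` lie on the surface
`x² + y² + z² + xyz = x + y + z` and the set of these points is invariant under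
each of the three Vieta involutions `s_x, s_y, s_z` (with `A = B = C = 1`). -/
theorem boalch_klein_orbit :
    let O : Set (ℂ × ℂ × ℂ) :=
      {(0, 0, 0), (1, 0, 0), (0, 1, 0), (0, 0, 1), (1, 1, 0), (1, 0, 1), (0, 1, 1)}
    let sx : ℂ × ℂ × ℂ → ℂ × ℂ × ℂ := fun p => (1 - p.1 - p.2.1 * p.2.2, p.2.1, p.2.2)
    let sy : ℂ × ℂ × ℂ → ℂ × ℂ × ℂ := fun p => (p.1, 1 - p.2.1 - p.2.2 * p.1, p.2.2)
    let sz : ℂ × ℂ × ℂ → ℂ × ℂ × ℂ := fun p => (p.1, p.2.1, 1 - p.2.2 - p.1 * p.2.1)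
    (∀ p ∈ O, p.1 ^ 2 + p.2.1 ^ 2 + p.2.2 ^ 2 + p.1 * p.2.1 * p.2.2
        = p.1 + p.2.1 + p.2.2) ∧
      Set.MapsTo sx O O ∧ Set.MapsTo sy O O ∧ Set.MapsTo sz O O := by
  refine ⟨?_, ?_, ?_, ?_⟩ <;>
  · intro p hp
    simp only [Set.mem_insert_iff, Set.mem_singleton_iff] at hp ⊢
    rcases hp with h|h|h|h|h|h|h <;> subst h <;> norm_num
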